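/- arXiv:2007.05625 — 3 statements merged into one kernel-verified Lean document; each statement's English description precedes it below -/
import Mathlib

section
/- For p ≥ 2 and vectors x, y in ℝ^d, the inner product of (|x|^{p-2} x − |y|^{p-2} y) with (x − y) is at least 2^{2−p} |x − y|^p. -/
/-!
With `a = ‖x‖`, `b = ‖y‖`, `t = ‖x - y‖`, `α = a ^ (p - 2)`, `β = b ^ (p - 2)`, the polarization
identity gives `⟪α x - β y, x - y⟫ = (α + β) t² / 2 + (α - β)(a² - b²) / 2`, so only these
four reals matter. Since `(α - β)(a - b) ≥ 0` and `t ≤ a + b`, this is at least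
`t² (a ^ (p - 1) + b ^ (p - 1)) / (a + b)`, and the power mean inequality
`(a + b) ^ (p - 1) ≤ 2 ^ (p - 2) (a ^ (p - 1) + b ^ (p - 1))` together with `t ≤ a + b` once
more bounds that from below by `2 ^ (2 - p) t ^ p`.
-/

theorem Real.rpow_add_le_mul_rpow_add_rpow {a b : ℝ} (ha : 0 ≤ a) (hb : 0 ≤ b) {q : ℝ}
    (hq : 1 ≤ q) : (a + b) ^ q ≤ 2 ^ (q - 1) * (a ^ q + b ^ q) := by
  lift a to NNReal using ha
  lift b to NNReal using hb
  exact_mod_cast NNReal.rpow_add_le_mul_rpow_add_rpow a b hq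

theorem real_inner_smul_sub_smul_sub_eq {E : Type*} [NormedAddCommGroup E]
    [InnerProductSpace ℝ E] (α β : ℝ) (x y : E) :
    inner ℝ (α • x - β • y) (x - y) =
      (α + β) / 2 * ‖x - y‖ ^ 2 + (α - β) * (‖x‖ ^ 2 - ‖y‖ ^ 2) / 2 := by
  simp only [inner_sub_left, inner_sub_right, real_inner_smul_left, real_inner_self_eq_norm_sq,
    real_inner_comm x y]
  linear_combination (-(α + β) / 2) * norm_sub_sq_real x y

theorem rpow_sub_rpow_mul_sub_nonneg {a b r : ℝ} (ha : 0 ≤ a) (hb : 0 ≤ b) (hr : 0 ≤ r) :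
    0 ≤ (a ^ r - b ^ r) * (a - b) := by
  rcases le_total a b with h | h
  · exact mul_nonneg_of_nonpos_of_nonpos (sub_nonpos.2 (Real.rpow_le_rpow ha h hr))
      (sub_nonpos.2 h)
  · exact mul_nonneg (sub_nonneg.2 (Real.rpow_le_rpow hb h hr)) (sub_nonneg.2 h)

theorem add_mul_sq_le_of_sub_mul_sub_nonneg {a b t α β : ℝ} (ht : 0 ≤ t) (htab : t ≤ a + b)
    (hαβ : 0 ≤ (α - β) * (a - b)) :
    (α * a + β * b) * t ^ 2 ≤
      (a + b) * ((α + β) / 2 * t ^ 2 + (α - β) * (a ^ 2 - b ^ 2) / 2) := by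
  have hgap : 0 ≤ (a + b) ^ 2 - t ^ 2 := sub_nonneg.2 (pow_le_pow_left₀ ht htab 2)
  refine sub_nonneg.1 ?_
  calc 0 ≤ (α - β) * (a - b) * ((a + b) ^ 2 - t ^ 2) / 2 :=
        div_nonneg (mul_nonneg hαβ hgap) two_pos.le
    _ = _ := by ring

theorem two_rpow_two_sub_mul_rpow_le {a b t p : ℝ} (ha : 0 ≤ a) (hb : 0 ≤ b) (ht : 0 ≤ t)
    (htab : t ≤ a + b) (hp : 2 ≤ p) :
    2 ^ (2 - p) * t ^ p ≤
      (a ^ (p - 2) + b ^ (p - 2)) / 2 * t ^ 2 +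
        (a ^ (p - 2) - b ^ (p - 2)) * (a ^ 2 - b ^ 2) / 2 := by
  rcases (add_nonneg ha hb).eq_or_lt with hab | hab
  · obtain ⟨rfl, rfl, rfl⟩ : a = 0 ∧ b = 0 ∧ t = 0 := ⟨by linarith, by linarith, by linarith⟩
    simp [Real.zero_rpow (by linarith : p ≠ 0)]
  have hsplit : ∀ {s : ℝ}, 0 ≤ s → s ^ (p - 1) = s ^ (p - 2) * s := fun hs => by
    rw [← Real.rpow_add_one' hs (by linarith)]
    ring_nf
  have hpow : t ^ p = t ^ (p - 2) * t ^ 2 := by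
    rw [← Real.rpow_natCast, ← Real.rpow_add' ht (by norm_num; linarith)]
    ring_nf
  have hmean : 2 ^ (2 - p) * (a + b) ^ (p - 1) ≤ a ^ (p - 2) * a + b ^ (p - 2) * b := by
    have h := Real.rpow_add_le_mul_rpow_add_rpow ha hb (q := p - 1) (by linarith)
    rw [hsplit ha, hsplit hb, show p - 1 - 1 = p - 2 by ring] at h
    calc 2 ^ (2 - p) * (a + b) ^ (p - 1)
        ≤ 2 ^ (2 - p) * (2 ^ (p - 2) * (a ^ (p - 2) * a + b ^ (p - 2) * b)) := by gcongr
      _ = a ^ (p - 2) * a + b ^ (p - 2) * b := by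
        rw [← mul_assoc, ← Real.rpow_add two_pos]
        norm_num
  refine le_of_mul_le_mul_left ?_ hab
  calc (a + b) * (2 ^ (2 - p) * t ^ p) = 2 ^ (2 - p) * (a + b) * t ^ (p - 2) * t ^ 2 := by
        rw [hpow]; ring
    _ ≤ 2 ^ (2 - p) * (a + b) * (a + b) ^ (p - 2) * t ^ 2 := by
        gcongr
    _ = 2 ^ (2 - p) * (a + b) ^ (p - 1) * t ^ 2 := by rw [hsplit hab.le]; ring
    _ ≤ (a ^ (p - 2) * a + b ^ (p - 2) * b) * t ^ 2 := by gcongr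
    _ ≤ _ := add_mul_sq_le_of_sub_mul_sub_nonneg ht htab
        (rpow_sub_rpow_mul_sub_nonneg ha hb (by linarith))

/-- p-Laplacian monotonicity inequality with explicit constant, for `p ≥ 2`. -/
theorem plap_monotone_big_p (d : ℕ) (p : ℝ) (hp : 2 ≤ p)
    (x y : EuclideanSpace ℝ (Fin d)) :
    (2:ℝ) ^ (2 - p) * ‖x - y‖ ^ p ≤
      (inner ℝ ((‖x‖ ^ (p - 2)) • x - (‖y‖ ^ (p - 2)) • y) (x - y) : ℝ) := by
  rw [real_inner_smul_sub_smul_sub_eq]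
  exact two_rpow_two_sub_mul_rpow_le (norm_nonneg x) (norm_nonneg y) (norm_nonneg _)
    (norm_sub_le x y) hp
end

section
/- For 1 < p ≤ 2 and vectors x, y in ℝ^d not both zero, (|x|^{p-2} x − |y|^{p-2} y)·(x − y) ≥ (p − 1) |x − y|^2 (|x| + |y|)^{p−2}. -/
/-! With `a = ‖x‖`, `b = ‖y‖` and `t = ⟪x, y⟫`, both sides are affine in `t`, which ranges over
`[-a b, a b]`; so it suffices to check the two endpoints, i.e. the one-dimensional cases of
parallel and antiparallel vectors. For parallel vectors this is the concavity of
`s ↦ s ^ (p - 1)` together with `(a + b) ^ (p - 2) ≤ a ^ (p - 2)`; for antiparallel ones it is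
the subadditivity of `s ↦ s ^ (p - 1)`. -/

open Real

lemma add_mul_le_add_mul_of_abs_le {f₁ g₁ f₂ g₂ m t : ℝ} (hpos : f₁ + g₁ * m ≤ f₂ + g₂ * m)
    (hneg : f₁ - g₁ * m ≤ f₂ - g₂ * m) (ht : |t| ≤ m) : f₁ + g₁ * t ≤ f₂ + g₂ * t := by
  obtain ⟨ht₁, ht₂⟩ := abs_le.mp ht
  rcases le_total g₁ g₂ with h | h <;> nlinarith

lemma Real.rpow_sub_two_mul_self {a p : ℝ} (ha : 0 ≤ a) (hp : p ≠ 1) :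
    a ^ (p - 2) * a = a ^ (p - 1) := by
  rw [← rpow_add_one' ha (by contrapose! hp; linarith)]
  ring_nf

lemma Real.rpow_le_rpow_add_mul_rpow_sub_one {a b q : ℝ} (ha : 0 < a) (hb : 0 ≤ b)
    (hq₀ : 0 ≤ q) (hq₁ : q ≤ 1) : b ^ q ≤ a ^ q + q * a ^ (q - 1) * (b - a) := by
  have bernoulli := rpow_one_add_le_one_add_mul_self (s := b / a - 1)
    (by linarith [div_nonneg hb ha.le]) hq₀ hq₁
  rw [add_sub_cancel, div_rpow hb ha.le, div_le_iff₀ (rpow_pos_of_pos ha q)] at bernoulli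
  calc b ^ q ≤ (1 + q * (b / a - 1)) * a ^ q := bernoulli
    _ = a ^ q + q * a ^ (q - 1) * (b - a) := by rw [rpow_sub_one ha.ne']; field_simp

lemma plap_monotone_aligned {p a b : ℝ} (hp₁ : 1 < p) (hp₂ : p ≤ 2) (ha : 0 ≤ a) (hb : 0 ≤ b) :
    (p - 1) * (a - b) ^ 2 * (a + b) ^ (p - 2) ≤ (a ^ (p - 1) - b ^ (p - 1)) * (a - b) := by
  wlog hba : b < a generalizing a b
  · rcases (not_lt.mp hba).eq_or_lt with rfl | hab
    · simp
    · convert this hb ha hab using 1 <;> ring_nf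
  have ha₀ : 0 < a := hb.trans_lt hba
  have tangent := rpow_le_rpow_add_mul_rpow_sub_one ha₀ hb (q := p - 1) (by linarith) (by linarith)
  rw [sub_sub, one_add_one_eq_two] at tangent
  have hsum : (a + b) ^ (p - 2) ≤ a ^ (p - 2) :=
    rpow_le_rpow_of_nonpos ha₀ (by linarith) (by linarith)
  calc (p - 1) * (a - b) ^ 2 * (a + b) ^ (p - 2)
      ≤ (p - 1) * (a - b) ^ 2 * a ^ (p - 2) := by gcongr
    _ = (a - b) * ((p - 1) * a ^ (p - 2) * (a - b)) := by ring
    _ ≤ (a - b) * (a ^ (p - 1) - b ^ (p - 1)) := by gcongr; linarith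
    _ = _ := mul_comm _ _

lemma plap_monotone_opposed {p a b : ℝ} (hp₁ : 1 < p) (hp₂ : p ≤ 2) (ha : 0 ≤ a) (hb : 0 ≤ b) :
    (p - 1) * (a + b) ^ 2 * (a + b) ^ (p - 2) ≤ (a ^ (p - 1) + b ^ (p - 1)) * (a + b) := by
  have hab : 0 ≤ a + b := add_nonneg ha hb
  have subadd : (a + b) ^ (p - 1) ≤ a ^ (p - 1) + b ^ (p - 1) :=
    rpow_add_le_add_rpow ha hb (by linarith) (by linarith)
  calc (p - 1) * (a + b) ^ 2 * (a + b) ^ (p - 2)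
      = (p - 1) * (a + b) ^ (p - 1) * (a + b) := by
        rw [← rpow_sub_two_mul_self hab hp₁.ne']; ring
    _ ≤ (a + b) ^ (p - 1) * (a + b) := by
        gcongr; exact mul_le_of_le_one_left (rpow_nonneg hab _) (by linarith)
    _ ≤ (a ^ (p - 1) + b ^ (p - 1)) * (a + b) := by gcongr

lemma plap_monotone_of_abs_le {p a b t : ℝ} (hp₁ : 1 < p) (hp₂ : p ≤ 2) (ha : 0 ≤ a)
    (hb : 0 ≤ b) (ht : |t| ≤ a * b) :
    (p - 1) * (a ^ 2 - 2 * t + b ^ 2) * (a + b) ^ (p - 2) ≤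
      a ^ (p - 2) * a ^ 2 + b ^ (p - 2) * b ^ 2 - (a ^ (p - 2) + b ^ (p - 2)) * t := by
  have aligned := plap_monotone_aligned hp₁ hp₂ ha hb
  have opposed := plap_monotone_opposed hp₁ hp₂ ha hb
  rw [← rpow_sub_two_mul_self ha hp₁.ne', ← rpow_sub_two_mul_self hb hp₁.ne'] at aligned opposed
  have := add_mul_le_add_mul_of_abs_le (f₁ := (p - 1) * (a ^ 2 + b ^ 2) * (a + b) ^ (p - 2))
    (g₁ := -2 * (p - 1) * (a + b) ^ (p - 2)) (f₂ := a ^ (p - 2) * a ^ 2 + b ^ (p - 2) * b ^ 2)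
    (g₂ := -(a ^ (p - 2) + b ^ (p - 2))) (by linear_combination aligned)
    (by linear_combination opposed) ht
  linear_combination this

theorem plap_monotone {E : Type*} [NormedAddCommGroup E] [InnerProductSpace ℝ E] {p : ℝ}
    (hp₁ : 1 < p) (hp₂ : p ≤ 2) (x y : E) :
    (p - 1) * ‖x - y‖ ^ 2 * (‖x‖ + ‖y‖) ^ (p - 2) ≤
      inner ℝ (‖x‖ ^ (p - 2) • x - ‖y‖ ^ (p - 2) • y) (x - y) := by
  have hinner : inner ℝ (‖x‖ ^ (p - 2) • x - ‖y‖ ^ (p - 2) • y) (x - y) =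
      ‖x‖ ^ (p - 2) * ‖x‖ ^ 2 + ‖y‖ ^ (p - 2) * ‖y‖ ^ 2 -
        (‖x‖ ^ (p - 2) + ‖y‖ ^ (p - 2)) * inner ℝ x y := by
    simp only [inner_sub_left, inner_sub_right, real_inner_smul_left, real_inner_self_eq_norm_sq,
      real_inner_comm y x]
    ring
  rw [norm_sub_sq_real, hinner]
  exact plap_monotone_of_abs_le hp₁ hp₂ (norm_nonneg x) (norm_nonneg y)
    (abs_real_inner_le_norm x y)

theorem plap_monotone_small_p_general (d : ℕ) (p : ℝ) (hp1 : 1 < p) (hp2 : p ≤ 2)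
    (x y : EuclideanSpace ℝ (Fin d)) :
    (p - 1) * ‖x - y‖ ^ 2 * (‖x‖ + ‖y‖) ^ (p - 2) ≤
      (inner ℝ ((‖x‖ ^ (p - 2)) • x - (‖y‖ ^ (p - 2)) • y) (x - y) : ℝ) :=
  plap_monotone hp1 hp2 x y

/-- p-Laplacian monotonicity inequality for `1 < p ≤ 2`. -/
theorem plap_monotone_small_p (d : ℕ) (p : ℝ) (hp1 : 1 < p) (hp2 : p ≤ 2)
    (x y : EuclideanSpace ℝ (Fin d)) (hxy : ¬(x = 0 ∧ y = 0)) :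
    (p - 1) * ‖x - y‖ ^ 2 * (‖x‖ + ‖y‖) ^ (p - 2) ≤
      (inner ℝ ((‖x‖ ^ (p - 2)) • x - (‖y‖ ^ (p - 2)) • y) (x - y) : ℝ) :=
  plap_monotone_small_p_general d p hp1 hp2 x y
end

section
/- Fully-discrete finite-volume mass balance: consider a finite index set J, cell areas |ω_j| > 0, nonnegative values u_n^j, u_{n-1}^j, sources F_n^j, edge lengths ℓ_{(j,k)} > 0 on a symmetric edge relation, and edge fluxes Q_n^{(j,k)}. Assume antisymmetry of fluxes on interior wet edges: u_n^j u_n^k > 0 implies Q_n^{(k,j)} = −Q_n^{(j,k)}, and that for each j with u_n^j > 0, (u_n^j − u_{n-1}^j)/Δt + |ω_j|^{-1} Σ_{k ∈ E_j} Q_n^{(j,k)} ℓ_{(j,k)} = F_n^j. Define M_n = Σ_j u_n^j |ω_j|, C_n = Δt Σ_{u_n^j>0} F_n^j |ω_j|, R_n = Σ_{u_n^j=0} u_{n-1}^j |ω_j|, and B_n = Δt Σ_{(j,k): u_n^j>0, u_n^k=0} Q_n^{(j,k)} ℓ_{(j,k)}. Then M_n = M_{n-1} + C_n − R_n − B_n.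 -/
open Finset

/-- Fully-discrete finite-volume mass balance:
`M_n = M_{n-1} + C_n - R_n - B_n`, where `B_n` is the boundary leak over
wet–dry edges. -/
theorem fv_mass_balance (ι : Type*) [Fintype ι] (E : ι → ι → Prop) [DecidableRel E]
    (hEsymm : ∀ j k, E j k → E k j) (hEirr : ∀ j, ¬ E j j)
    (ℓ Q : ι → ι → ℝ)
    (hℓsymm : ∀ j k, E j k → ℓ j k = ℓ k j) (hℓpos : ∀ j k, E j k → 0 < ℓ j k)
    (ω un um F : ι → ℝ) (hω : ∀ j, 0 < ω j)
    (hun : ∀ j, 0 ≤ un j) (hum : ∀ j, 0 ≤ um j)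
    (Δt : ℝ) (hΔt : 0 < Δt)
    (hanti : ∀ j k, E j k → 0 < un j * un k → Q k j = -Q j k)
    (hbal : ∀ j, 0 < un j →
      (un j - um j) / Δt
        + (ω j)⁻¹ * ∑ k ∈ univ.filter (fun k => E j k), Q j k * ℓ j k = F j) :
    ∑ j, un j * ω j
      = (∑ j, um j * ω j)
        + Δt * (∑ j ∈ univ.filter (fun j => 0 < un j), F j * ω j)
        - (∑ j ∈ univ.filter (fun j => un j = 0), um j * ω j)
        - Δt * ∑ e ∈ (univ ×ˢ univ).filter
            (fun e : ι × ι => E e.1 e.2 ∧ 0 < un e.1 ∧ un e.2 = 0),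
            Q e.1 e.2 * ℓ e.1 e.2 := by
  classical
  set W : Finset ι := univ.filter (fun j => 0 < un j) with hW
  -- pointwise identity on wet cells
  have key : ∀ j ∈ W, un j * ω j
      = um j * ω j + Δt * (F j * ω j)
        - Δt * ∑ k ∈ univ.filter (fun k => E j k), Q j k * ℓ j k := by
    intro j hj
    have hj' : 0 < un j := by simpa [hW] using hj
    have h := hbal j hj'
    have hω' : (ω j) ≠ 0 := (hω j).ne'
    have hΔ' : Δt ≠ 0 := hΔt.ne'
    field_simp at h
    nlinarith [h]
  -- LHS restricts to wet cells
  have h1 : ∑ j, un j * ω j = ∑ j ∈ W, un j * ω j := by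
    symm
    apply Finset.sum_subset (filter_subset _ _)
    intro j _ hj
    have : un j = 0 := by
      by_contra hne
      exact hj (by simp [hW, lt_of_le_of_ne (hun j) (Ne.symm hne)])
    simp [this]
  -- split previous mass
  have h2 : ∑ j, um j * ω j
      = ∑ j ∈ W, um j * ω j + ∑ j ∈ univ.filter (fun j => un j = 0), um j * ω j := by
    rw [← Finset.sum_filter_add_sum_filter_not univ (fun j => 0 < un j)]
    congr 1
    apply Finset.sum_congr _ (fun _ _ => rfl)
    apply Finset.filter_congr
    intro j _
    simp only [not_lt]
    constructor
    · intro h; exact le_antisymm h (hun j)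
    · intro h; exact h.le
  -- flux double sum as a sum over edges
  have h3 : (∑ j ∈ W, ∑ k ∈ univ.filter (fun k => E j k), Q j k * ℓ j k)
      = ∑ e ∈ (univ ×ˢ univ).filter (fun e : ι × ι => E e.1 e.2 ∧ 0 < un e.1),
          Q e.1 e.2 * ℓ e.1 e.2 := by
    rw [Finset.sum_filter, Finset.sum_filter, Finset.univ_product_univ, Fintype.sum_prod_type]
    apply Finset.sum_congr rfl
    intro j _
    by_cases hu : 0 < un j <;> simp [Finset.sum_filter, hu]
  -- wet-wet fluxes cancel
  have h5 : ∑ e ∈ (univ ×ˢ univ).filter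
        (fun e : ι × ι => (E e.1 e.2 ∧ 0 < un e.1) ∧ 0 < un e.2),
        Q e.1 e.2 * ℓ e.1 e.2 = 0 := by
    apply Finset.sum_involution (fun e _ => (e.2, e.1))
    · intro e he
      simp only [mem_filter] at he
      obtain ⟨-, ⟨hE, hu1⟩, hu2⟩ := he
      rw [hanti e.1 e.2 hE (mul_pos hu1 hu2), hℓsymm e.1 e.2 hE]
      ring
    · intro e he _
      simp only [mem_filter] at he
      obtain ⟨-, ⟨hE, -⟩, -⟩ := he
      intro hcontra
      have h12 : e.2 = e.1 := congrArg Prod.fst hcontra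
      exact hEirr e.1 (h12 ▸ hE)
    · intro e he
      simp only [mem_filter, mem_product, mem_univ, true_and, and_true] at he ⊢
      exact ⟨⟨hEsymm _ _ he.1.1, he.2⟩, he.1.2⟩
    · intro e _; rfl
  -- split edges by dryness of target
  have h4 : ∑ e ∈ (univ ×ˢ univ).filter (fun e : ι × ι => E e.1 e.2 ∧ 0 < un e.1),
        Q e.1 e.2 * ℓ e.1 e.2
      = ∑ e ∈ (univ ×ˢ univ).filter
          (fun e : ι × ι => E e.1 e.2 ∧ 0 < un e.1 ∧ un e.2 = 0),
          Q e.1 e.2 * ℓ e.1 e.2 := by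
    rw [← Finset.sum_filter_add_sum_filter_not
        ((univ ×ˢ univ).filter (fun e : ι × ι => E e.1 e.2 ∧ 0 < un e.1))
        (fun e : ι × ι => 0 < un e.2), Finset.filter_filter, Finset.filter_filter]
    rw [show (∑ e ∈ (univ ×ˢ univ).filter
        (fun e : ι × ι => (E e.1 e.2 ∧ 0 < un e.1) ∧ 0 < un e.2),
        Q e.1 e.2 * ℓ e.1 e.2) = 0 from h5, zero_add]
    apply Finset.sum_congr _ (fun _ _ => rfl)
    apply Finset.filter_congr
    intro e _
    simp only [not_lt, and_assoc]
    constructor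
    · rintro ⟨a, b, c⟩; exact ⟨a, b, le_antisymm c (hun e.2)⟩
    · rintro ⟨a, b, c⟩; exact ⟨a, b, c.le⟩
  calc ∑ j, un j * ω j = ∑ j ∈ W, un j * ω j := h1
    _ = ∑ j ∈ W, (um j * ω j + Δt * (F j * ω j)
          - Δt * ∑ k ∈ univ.filter (fun k => E j k), Q j k * ℓ j k) :=
        Finset.sum_congr rfl key
    _ = ∑ j ∈ W, um j * ω j + Δt * ∑ j ∈ W, F j * ω j
          - Δt * ∑ j ∈ W, ∑ k ∈ univ.filter (fun k => E j k), Q j k * ℓ j k := by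
        rw [Finset.sum_sub_distrib, Finset.sum_add_distrib, ← Finset.mul_sum,
          ← Finset.mul_sum]
    _ = _ := by rw [h3, h4, h2]; ring
end
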